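/- The Gordon–Andrews multisums satisfy the Rogers–Selberg recursions: Fix an integer k ≥ 1. For 0 ≤ i ≤ k define G_i ∈ ℚ[[x,q]] by G_i(x,q) = ∑_{N₁ ≥ ⋯ ≥ N_k ≥ 0} x^{N₁+⋯+N_k} q^{N₁²+⋯+N_k²+N_{i+1}+⋯+N_k} · ((q)_{N₁−N₂} ⋯ (q)_{N_{k−1}−N_k} (q)_{N_k})^{−1}. Then for every i with 1 ≤ i ≤ k, G_i(x, q) − (xq)^i · G_{k−i}(xq, q) = G_{i−1}(x, q), and moreover G_0(x, q) = G_k(xq, q). -/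

import Mathlib

open PowerSeries

/-- `(q)_n = ∏_{j=1}^n (1 - q^j)` in `ℚ[[q]]`. -/
noncomputable def qPoch (n : ℕ) : PowerSeries ℚ :=
  ∏ j ∈ Finset.range n, (1 - (X : PowerSeries ℚ) ^ (j + 1))

/-- Extension of a `k`-tuple `N₁ ≥ ⋯ ≥ N_k` (0-indexed) by zeros. -/
def pad {k : ℕ} (N : Fin k → ℕ) : ℕ → ℕ := fun j => if h : j < k then N ⟨j, h⟩ else 0

/-- We realize `ℚ[[x,q]]` as `ℚ[[q]][[x]]`; the coefficient of `x^m q^n` in `F` is the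
coefficient of `q^n` in the `m`-th coefficient of `F`. -/
abbrev XQSeries : Type := PowerSeries (PowerSeries ℚ)

/-- The substitution `F(x,q) ↦ F(x q^r, q)`: the coefficient of `x^m` gets multiplied by
`q^{r m}`, so the coefficient of `x^m q^n` of the result is the coefficient of
`x^m q^{n - r m}` of `F`. -/
noncomputable def qShift (r : ℕ) (F : XQSeries) : XQSeries :=
  PowerSeries.mk fun m => (X : PowerSeries ℚ) ^ (r * m) * PowerSeries.coeff m F

/-- The element `x` of `ℚ[[x,q]] = ℚ[[q]][[x]]`. -/
noncomputable def xVar : XQSeries := PowerSeries.X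

/-- The element `q` of `ℚ[[x,q]] = ℚ[[q]][[x]]`. -/
noncomputable def qVar : XQSeries := PowerSeries.C PowerSeries.X

/-- The Gordon–Andrews multisum
`G_i(x,q) = ∑_{N₁ ≥ ⋯ ≥ N_k ≥ 0} x^{N₁+⋯+N_k} q^{N₁²+⋯+N_k²+N_{i+1}+⋯+N_k}
  / ((q)_{N₁-N₂} ⋯ (q)_{N_{k-1}-N_k} (q)_{N_k}) ∈ ℚ[[x,q]]`:
the coefficient of `x^m` is the (finite) sum over weakly decreasing `k`-tuples
with `N₁ + ⋯ + N_k = m`. -/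
noncomputable def GA (k i : ℕ) : XQSeries :=
  PowerSeries.mk fun m =>
    ∑ N ∈ (Finset.Nat.antidiagonalTuple k m).filter
        (fun N => ∀ a b : Fin k, a ≤ b → N b ≤ N a),
      (X : PowerSeries ℚ) ^
          (∑ j ∈ Finset.range k, (pad N j) ^ 2 + ∑ j ∈ Finset.Ico i k, pad N j) *
        (∏ j ∈ Finset.range k, qPoch (pad N j - pad N (j + 1)))⁻¹

/-!
Removing the smallest part `s` of a tuple `N₁ ≥ ⋯ ≥ N_{k+1}` and subtracting `s` from the other
parts expresses the `(k+1)`-fold sum through the `k`-fold one: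
`G^{(k+1)}_i(x) = ∑_s x^{(k+1)s} q^{(k+1)s² + (k+1-i)s} / (q)_s · G^{(k)}_i(xq^{2s})`,
a sum converging coefficientwise in `x` since its `s`-th term is divisible by `x^s`.
With the convention `G_{-1} = 0`, all identities for `k` parts are the cases `0 ≤ j ≤ k + 1` of
`G_j - G_{j-1} = (xq)^j G_{k-j}(xq)`, the extreme cases `j = 0` and `j = k + 1` being immediate.
For `k + 1` parts, substitute the decomposition into `G_j - G_{j-1}`, apply the identities for `k`
parts at `j` and at `k + 1 - j`, and use `(1 - q^s)/(q)_s = 1/(q)_{s-1}`: the two sides then agree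
termwise once the summation index of the terms carrying `1 - q^s` is shifted by one.
-/

open scoped PowerSeries.WithPiTopology

theorem summable_of_X_pow_dvd {R : Type*} [Semiring R] [TopologicalSpace R] {f : ℕ → R⟦X⟧}
    (h : ∀ s, X ^ s ∣ f s) : Summable f := by
  rw [PowerSeries.WithPiTopology.summable_iff_summable_coeff]
  intro d
  refine summable_of_ne_finset_zero (s := Finset.range (d + 1)) fun s hs => ?_
  exact X_pow_dvd_iff.mp (h s) d (by simpa using hs)

theorem eq_of_hasSum_add_shift {α : Type*} [AddCommGroup α] [TopologicalSpace α]
    [IsTopologicalAddGroup α] [T2Space α] {u v : ℕ → α} {A B : α} (hv0 : v 0 = 0)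
    (hv : Summable v) (hA : HasSum (fun s => u s + v s) A)
    (hB : HasSum (fun s => u s + v (s + 1)) B) : A = B := by
  have hv' : HasSum (fun s => v (s + 1)) (∑' s, v s) := by
    simpa [hv0] using (hasSum_nat_add_iff' 1).mpr hv.hasSum
  have hA' : HasSum u (A - ∑' s, v s) := by simpa using hA.sub hv.hasSum
  have hB' : HasSum u (B - ∑' s, v s) := by simpa using hB.sub hv'
  exact sub_left_inj.mp (hA'.unique hB')

theorem rescale_C {R : Type*} [CommSemiring R] (a c : R) : rescale a (C c) = C c := by
  ext n
  rw [coeff_rescale, coeff_C]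
  split_ifs with hn <;> simp [hn]

theorem qPoch_succ_inv_mul (s : ℕ) :
    (qPoch (s + 1))⁻¹ * (1 - X ^ (s + 1)) = (qPoch s)⁻¹ := by
  have hunit : constantCoeff (1 - (X : PowerSeries ℚ) ^ (s + 1)) ≠ 0 := by simp
  rw [qPoch, Finset.prod_range_succ, ← qPoch, PowerSeries.mul_inv_rev, mul_right_comm,
    PowerSeries.inv_mul_cancel _ hunit, one_mul]

theorem qShift_eq_rescale (r : ℕ) (F : XQSeries) : qShift r F = rescale (X ^ r) F := by
  ext m
  simp [qShift, pow_mul]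

theorem hasSum_qShift {ι : Type*} {f : ι → XQSeries} {F : XQSeries} (h : HasSum f F) (r : ℕ) :
    HasSum (fun s => qShift r (f s)) (qShift r F) := by
  rw [PowerSeries.WithPiTopology.hasSum_iff_hasSum_coeff] at h ⊢
  intro m
  simpa only [qShift, coeff_mk] using (h m).mul_left _

def antitoneTuples (k m : ℕ) : Finset (Fin k → ℕ) :=
  (Finset.Nat.antidiagonalTuple k m).filter fun N => ∀ a b : Fin k, a ≤ b → N b ≤ N a

theorem mem_antitoneTuples {k m : ℕ} {N : Fin k → ℕ} :
    N ∈ antitoneTuples k m ↔ ∑ a, N a = m ∧ Antitone N := by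
  simp [antitoneTuples, Finset.Nat.mem_antidiagonalTuple, Antitone]

theorem pad_of_le {k : ℕ} (N : Fin k → ℕ) {j : ℕ} (h : k ≤ j) : pad N j = 0 := dif_neg (by omega)

theorem sum_range_pad {k : ℕ} (N : Fin k → ℕ) : ∑ j ∈ Finset.range k, pad N j = ∑ a, N a := by
  rw [← Fin.sum_univ_eq_sum_range]
  exact Finset.sum_congr rfl fun a _ => dif_pos a.isLt

def snocAdd {k : ℕ} (s : ℕ) (N : Fin k → ℕ) : Fin (k + 1) → ℕ :=
  Fin.snoc (fun a => N a + s) s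

theorem pad_snocAdd {k : ℕ} (s : ℕ) (N : Fin k → ℕ) {j : ℕ} (hj : j ≤ k) :
    pad (snocAdd s N) j = pad N j + s := by
  rcases hj.lt_or_eq with hj | rfl
  · simp [pad, snocAdd, hj, Nat.lt_succ_of_lt hj, Fin.snoc, Fin.castLT]
  · simp [pad, snocAdd, Fin.snoc]

theorem sum_snocAdd {k : ℕ} (s : ℕ) (N : Fin k → ℕ) :
    ∑ a, snocAdd s N a = ∑ a, N a + (k + 1) * s := by
  simp only [snocAdd, Fin.sum_univ_castSucc, Fin.snoc_castSucc, Fin.snoc_last,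
    Finset.sum_add_distrib, Finset.sum_const, Finset.card_univ, Fintype.card_fin, smul_eq_mul]
  ring

theorem antitone_snocAdd_iff {k : ℕ} (s : ℕ) (N : Fin k → ℕ) :
    Antitone (snocAdd s N) ↔ Antitone N := by
  constructor
  · intro h a b hab
    simpa [snocAdd] using h (Fin.castSucc_le_castSucc_iff.mpr hab)
  · intro h a b hab
    induction b using Fin.lastCases with
    | last => induction a using Fin.lastCases <;> simp [snocAdd]
    | cast b =>
      induction a using Fin.lastCases with
      | last => exact absurd hab (not_le.mpr (Fin.castSucc_lt_last b))
      | cast a => simpa [snocAdd] using h (Fin.castSucc_le_castSucc_iff.mp hab)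

theorem snocAdd_last_sub {k : ℕ} {N : Fin (k + 1) → ℕ} (hN : Antitone N) :
    snocAdd (N (Fin.last k)) (fun a => N a.castSucc - N (Fin.last k)) = N := by
  funext a
  induction a using Fin.lastCases with
  | last => simp [snocAdd]
  | cast a => simpa [snocAdd] using Nat.sub_add_cancel (hN (Fin.le_last a.castSucc))

theorem sum_antitoneTuples_succ {M : Type*} [AddCommMonoid M] (k d : ℕ)
    (f : (Fin (k + 1) → ℕ) → M) :
    ∑ N ∈ antitoneTuples (k + 1) d, f N =
      ∑ s ∈ (Finset.range (d + 1)).filter (fun s => (k + 1) * s ≤ d),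
        ∑ N ∈ antitoneTuples k (d - (k + 1) * s), f (snocAdd s N) := by
  rw [Finset.sum_sigma']
  symm
  refine Finset.sum_nbij' (fun p => snocAdd p.1 p.2)
    (fun N => ⟨N (Fin.last k), fun a => N a.castSucc - N (Fin.last k)⟩) ?_ ?_ ?_ ?_ (fun _ _ => rfl)
  · rintro ⟨s, N⟩ h
    simp only [Finset.mem_sigma, Finset.mem_filter, Finset.mem_range, mem_antitoneTuples] at h
    rw [mem_antitoneTuples, sum_snocAdd, antitone_snocAdd_iff, h.2.1]
    exact ⟨Nat.sub_add_cancel h.1.2, h.2.2⟩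
  · intro N h
    rw [mem_antitoneTuples] at h
    have hsum := sum_snocAdd (N (Fin.last k)) (fun a => N a.castSucc - N (Fin.last k))
    rw [snocAdd_last_sub h.2] at hsum
    have hanti := (antitone_snocAdd_iff _ _).mp (snocAdd_last_sub h.2 ▸ h.2)
    simp only [Finset.mem_sigma, Finset.mem_filter, Finset.mem_range, mem_antitoneTuples]
    have hle : N (Fin.last k) ≤ (k + 1) * N (Fin.last k) := Nat.le_mul_of_pos_left _ k.succ_pos
    exact ⟨⟨by omega, by omega⟩, by omega, hanti⟩
  · rintro ⟨s, N⟩ _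
    simp [snocAdd]
  · intro N h
    exact snocAdd_last_sub (mem_antitoneTuples.mp h).2

def gaExponent (k i : ℕ) (N : Fin k → ℕ) : ℕ :=
  ∑ j ∈ Finset.range k, pad N j ^ 2 + ∑ j ∈ Finset.Ico i k, pad N j

noncomputable def gaDenominator (k : ℕ) (N : Fin k → ℕ) : PowerSeries ℚ :=
  ∏ j ∈ Finset.range k, qPoch (pad N j - pad N (j + 1))

theorem coeff_GA (k i m : ℕ) :
    coeff m (GA k i) =
      ∑ N ∈ antitoneTuples k m, X ^ gaExponent k i N * (gaDenominator k N)⁻¹ :=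
  coeff_mk _ _

theorem gaExponent_snocAdd (k i s : ℕ) (N : Fin k → ℕ) :
    gaExponent (k + 1) i (snocAdd s N) =
      gaExponent k i N + ((k + 1) * s ^ 2 + (k + 1 - i) * s + 2 * s * ∑ a, N a) := by
  have hpad : ∀ j ∈ Finset.range (k + 1), pad (snocAdd s N) j = pad N j + s := fun j hj =>
    pad_snocAdd s N (Nat.lt_succ_iff.mp (Finset.mem_range.mp hj))
  have hsq : ∑ j ∈ Finset.range (k + 1), pad (snocAdd s N) j ^ 2 =
      ∑ j ∈ Finset.range k, pad N j ^ 2 + (2 * s * ∑ a, N a + (k + 1) * s ^ 2) := by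
    rw [Finset.sum_congr rfl fun j hj => by rw [hpad j hj]]
    simp only [add_sq, Finset.sum_add_distrib, Finset.sum_range_succ _ k, pad_of_le N le_rfl,
      ← Finset.sum_mul, ← Finset.mul_sum, sum_range_pad, Finset.sum_const, Finset.card_range]
    ring
  have htail : ∑ j ∈ Finset.Ico i (k + 1), pad (snocAdd s N) j =
      ∑ j ∈ Finset.Ico i k, pad N j + (k + 1 - i) * s := by
    rw [Finset.sum_congr rfl fun j hj =>
      hpad j (Finset.mem_range.mpr (Finset.mem_Ico.mp hj).2)]
    rw [Finset.sum_add_distrib, Finset.sum_const, Nat.card_Ico, smul_eq_mul]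
    rcases le_or_gt i k with hi | hi
    · rw [Finset.sum_Ico_succ_top hi, pad_of_le N le_rfl, add_zero]
    · rw [Finset.Ico_eq_empty (by omega), Finset.Ico_eq_empty (by omega)]
  rw [gaExponent, gaExponent, hsq, htail]
  ring

theorem gaDenominator_snocAdd (k s : ℕ) (N : Fin k → ℕ) :
    gaDenominator (k + 1) (snocAdd s N) = gaDenominator k N * qPoch s := by
  rw [gaDenominator, Finset.prod_range_succ, pad_snocAdd s N le_rfl, pad_of_le N le_rfl,
    pad_of_le (snocAdd s N) le_rfl, gaDenominator, zero_add, Nat.sub_zero]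
  congr 1
  refine Finset.prod_congr rfl fun j hj => ?_
  have hj := Finset.mem_range.mp hj
  rw [pad_snocAdd s N hj.le, pad_snocAdd s N hj, Nat.add_sub_add_right]

theorem GA_zero_eq_qShift (k : ℕ) : GA k 0 = qShift 1 (GA k k) := by
  ext m : 1
  rw [qShift, coeff_mk, one_mul, coeff_GA, coeff_GA, Finset.mul_sum]
  refine Finset.sum_congr rfl fun N hN => ?_
  have hexp : gaExponent k 0 N = m + gaExponent k k N := by
    simp only [gaExponent, Nat.Ico_zero_eq_range, sum_range_pad, (mem_antitoneTuples.mp hN).1,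
      Finset.Ico_self, Finset.sum_empty]
    ring
  rw [hexp, pow_add, mul_assoc]

theorem GA_succ_self (k : ℕ) : GA k (k + 1) = GA k k := by
  ext m : 1
  simp [coeff_GA, gaExponent]

noncomputable def peelWeight (n s : ℕ) : XQSeries :=
  C (qPoch s)⁻¹ * qVar ^ (n * s ^ 2) * xVar ^ (n * s)

theorem coeff_peelWeight_mul_qShift (n s e r d : ℕ) (F : XQSeries) :
    coeff d (peelWeight n s * qVar ^ e * qShift r F) =
      if n * s ≤ d then
        (qPoch s)⁻¹ * X ^ (n * s ^ 2 + e + r * (d - n * s)) * coeff (d - n * s) F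
      else 0 := by
  have hsplit : peelWeight n s * qVar ^ e * qShift r F =
      C ((qPoch s)⁻¹ * X ^ (n * s ^ 2 + e)) * (X ^ (n * s) * qShift r F) := by
    simp only [peelWeight, qVar, xVar, map_mul, map_pow, pow_add]
    ring
  rw [hsplit, coeff_C_mul, coeff_X_pow_mul']
  split_ifs
  · rw [qShift, coeff_mk, pow_add, pow_mul]
    ring
  · rw [mul_zero]

theorem summable_peelWeight_mul {n : ℕ} (hn : 1 ≤ n) (g : ℕ → XQSeries) :
    Summable fun s => peelWeight n s * g s :=
  summable_of_X_pow_dvd fun s =>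
    ((pow_dvd_pow X (Nat.le_mul_of_pos_left s hn)).mul_left _).mul_right _

theorem coeff_GA_succ (k i d : ℕ) :
    coeff d (GA (k + 1) i) =
      ∑ s ∈ Finset.range (d + 1),
        coeff d (peelWeight (k + 1) s * qVar ^ ((k + 1 - i) * s) * qShift (2 * s) (GA k i)) := by
  simp only [coeff_peelWeight_mul_qShift, ← Finset.sum_filter, coeff_GA, Finset.mul_sum]
  rw [sum_antitoneTuples_succ]
  refine Finset.sum_congr rfl fun s _ => Finset.sum_congr rfl fun N hN => ?_
  rw [gaExponent_snocAdd, gaDenominator_snocAdd, (mem_antitoneTuples.mp hN).1,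
    PowerSeries.mul_inv_rev]
  ring

theorem hasSum_GA_succ (k i : ℕ) :
    HasSum (fun s => peelWeight (k + 1) s * qVar ^ ((k + 1 - i) * s) * qShift (2 * s) (GA k i))
      (GA (k + 1) i) := by
  rw [PowerSeries.WithPiTopology.hasSum_iff_hasSum_coeff]
  intro d
  rw [coeff_GA_succ]
  refine hasSum_sum_of_ne_finset_zero fun s hs => ?_
  have hle : s ≤ (k + 1) * s := Nat.le_mul_of_pos_left s k.succ_pos
  rw [Finset.mem_range, not_lt] at hs
  rw [coeff_peelWeight_mul_qShift, if_neg (by omega)]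

noncomputable def GAPred (k : ℕ) : ℕ → XQSeries
  | 0 => 0
  | i + 1 => GA k i

theorem hasSum_GAPred_succ (k j : ℕ) :
    HasSum
      (fun s => peelWeight (k + 1) s * qVar ^ ((k + 2 - j) * s) * qShift (2 * s) (GAPred k j))
      (GAPred (k + 1) j) := by
  cases j with
  | zero => simp [GAPred, qShift_eq_rescale, hasSum_zero]
  | succ i => simpa [GAPred] using hasSum_GA_succ k i

theorem GAPred_succ_sub_of_GAPred_succ_sub {k j a : ℕ} (hja : j + a = k + 1) (hj : 1 ≤ j)
    (ihj : GAPred k (j + 1) - GAPred k j = (xVar * qVar) ^ j * qShift 1 (GAPred k a))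
    (iha : GAPred k (a + 1) - GAPred k a = (xVar * qVar) ^ a * qShift 1 (GAPred k j)) :
    GAPred (k + 1) (j + 1) - GAPred (k + 1) j =
      (xVar * qVar) ^ j * qShift 1 (GAPred (k + 1) (a + 1)) := by
  have hL := (hasSum_GAPred_succ k (j + 1)).sub (hasSum_GAPred_succ k j)
  have hR := (hasSum_qShift (hasSum_GAPred_succ k (a + 1)) 1).mul_left ((xVar * qVar) ^ j)
  rw [show k + 2 - (j + 1) = a by omega, show k + 2 - j = a + 1 by omega] at hL
  rw [show k + 2 - (a + 1) = j by omega] at hR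
  rw [sub_eq_iff_eq_add'] at ihj iha
  set E := GAPred k
  obtain ⟨j, rfl⟩ : ∃ j', j = j' + 1 := ⟨j - 1, by omega⟩
  obtain rfl : k = j + a := by omega
  refine eq_of_hasSum_add_shift
    (u := fun s => peelWeight (j + a + 1) s *
      (qVar ^ (a * s) * (xVar * qVar ^ (2 * s + 1)) ^ (j + 1) * qShift (2 * s + 1) (E a)))
    (v := fun s => peelWeight (j + a + 1) s *
      (qVar ^ (a * s) * (1 - qVar ^ s) * qShift (2 * s) (E (j + 1))))
    (by simp) (summable_peelWeight_mul (by omega) _)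
    (hL.congr_fun fun s => ?_) (hR.congr_fun fun s => ?_)
  · rw [ihj]
    simp only [qShift_eq_rescale, map_add, map_mul, map_pow, rescale_rescale, xVar, qVar,
      rescale_X, rescale_C]
    ring_nf
  · have hpoch : C (qPoch (s + 1))⁻¹ * (1 - C X ^ (s + 1)) = C (qPoch s)⁻¹ := by
      rw [← map_pow, ← map_one C, ← map_sub, ← map_mul, qPoch_succ_inv_mul]
    rw [iha]
    simp only [qShift_eq_rescale, map_add, map_mul, map_pow, rescale_rescale, xVar, qVar,
      rescale_X, rescale_C, peelWeight]
    linear_combination (norm := ring_nf)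
      C X ^ ((j + a + 1) * (s + 1) ^ 2) * X ^ ((j + a + 1) * (s + 1)) * C X ^ (a * (s + 1)) *
        rescale (X ^ (2 * (s + 1))) (E (j + 1)) * hpoch

theorem GAPred_succ_sub :
    ∀ k j : ℕ, j ≤ k + 1 →
      GAPred k (j + 1) - GAPred k j = (xVar * qVar) ^ j * qShift 1 (GAPred k (k + 1 - j))
  | k, 0, _ => by simpa [GAPred] using GA_zero_eq_qShift k
  | k, j + 1, hj => by
    rcases hj.eq_or_lt with hjk | hjk
    · obtain rfl : j = k := by omega
      simp [GAPred, GA_succ_self, qShift_eq_rescale]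
    · obtain ⟨k, rfl⟩ : ∃ k', k = k' + 1 := ⟨k - 1, by omega⟩
      have ihj := GAPred_succ_sub k (j + 1) (by omega)
      have iha := GAPred_succ_sub k (k - j) (by omega)
      rw [show k + 1 - (j + 1) = k - j by omega] at ihj
      rw [show k + 1 - (k - j) = j + 1 by omega] at iha
      rw [show k + 1 + 1 - (j + 1) = k - j + 1 by omega]
      exact GAPred_succ_sub_of_GAPred_succ_sub (by omega) (by omega) ihj iha

theorem gordon_andrews_satisfy_rogers_selberg_general (k : ℕ) :
    (∀ i, 1 ≤ i → i ≤ k →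
        GA k i - (xVar * qVar) ^ i * qShift 1 (GA k (k - i)) = GA k (i - 1)) ∧
      GA k 0 = qShift 1 (GA k k) := by
  refine ⟨fun i hi hik => ?_, GA_zero_eq_qShift k⟩
  obtain ⟨i, rfl⟩ : ∃ i', i = i' + 1 := ⟨i - 1, by omega⟩
  have h := GAPred_succ_sub k (i + 1) (by omega)
  rw [show k + 1 - (i + 1) = k - (i + 1) + 1 by omega] at h
  simp only [GAPred] at h
  rw [← h, sub_sub_cancel, Nat.add_sub_cancel]

/-- **The Gordon–Andrews multisums satisfy the Rogers–Selberg recursions**: for `k ≥ 1`,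
`G_i(x,q) - (xq)^i G_{k-i}(xq,q) = G_{i-1}(x,q)` for `1 ≤ i ≤ k`, and
`G_0(x,q) = G_k(xq,q)`. -/
theorem gordon_andrews_satisfy_rogers_selberg (k : ℕ) (hk : 1 ≤ k) :
    (∀ i, 1 ≤ i → i ≤ k →
        GA k i - (xVar * qVar) ^ i * qShift 1 (GA k (k - i)) = GA k (i - 1)) ∧
      GA k 0 = qShift 1 (GA k k) :=
  gordon_andrews_satisfy_rogers_selberg_general k
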